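/- For every equivalence class E of ∼ and every 1 ≤ i ≤ m−1, the span ℂ·E is invariant under π_i: for every T ∈ E, π_i(T) is either 0 or an element of E. In particular, if i is a non-attacking descent of T ∈ E, then s_i·T ∼ T. -/

import Mathlib

open Classical

noncomputable section

namespace Genomic

/-- `lam` encodes a partition of `n`: `lam r` is the length of the `r`-th row (rows are
1-based, indexed from the top). -/
def IsPartitionOf (n : ℕ) (lam : ℕ → ℕ) : Prop :=
  (∀ r, 1 ≤ r → lam (r + 1) ≤ lam r) ∧ (∀ r, n < r → lam r = 0) ∧
    (∑ r ∈ Finset.Icc 1 n, lam r) = n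

/-- `p = (r, c)` is a box of the Young diagram of `lam` (row `r` from the top,
column `c` from the left, both 1-based). -/
def IsCell (lam : ℕ → ℕ) (p : ℕ × ℕ) : Prop :=
  1 ≤ p.1 ∧ 1 ≤ p.2 ∧ p.2 ≤ lam p.1

/-- `T` is an increasing gapless tableau of shape `lam` with maximum entry `m`
(normalized to take the value `0` outside the Young diagram). -/
def IsIGLT (lam : ℕ → ℕ) (m : ℕ) (T : ℕ × ℕ → ℕ) : Prop :=
  (∀ p, ¬ IsCell lam p → T p = 0) ∧
  (∀ p, IsCell lam p → 1 ≤ T p ∧ T p ≤ m) ∧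
  (∀ r c, IsCell lam (r, c) → IsCell lam (r, c + 1) → T (r, c) < T (r, c + 1)) ∧
  (∀ r c, IsCell lam (r, c) → IsCell lam (r + 1, c) → T (r, c) < T (r + 1, c)) ∧
  (∀ k, 1 ≤ k → k ≤ m → ∃ p, IsCell lam p ∧ T p = k)

/-- The set of boxes of `T` containing the entry `i`, i.e. `T⁻¹(i)`. -/
def cellsWith (lam : ℕ → ℕ) (T : ℕ × ℕ → ℕ) (i : ℕ) : Set (ℕ × ℕ) :=
  {p | IsCell lam p ∧ T p = i}

def rowSet (lam : ℕ → ℕ) (T : ℕ × ℕ → ℕ) (i : ℕ) : Set ℕ :=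
  {r | ∃ c, IsCell lam (r, c) ∧ T (r, c) = i}

/-- The row `r_t^{(i)}` of `Top_i(T)`. -/
def rtop (lam : ℕ → ℕ) (T : ℕ × ℕ → ℕ) (i : ℕ) : ℕ := sInf (rowSet lam T i)

/-- The row `r_b^{(i)}` of `Bot_i(T)`. -/
def rbot (lam : ℕ → ℕ) (T : ℕ × ℕ → ℕ) (i : ℕ) : ℕ := sSup (rowSet lam T i)

/-- The column `c_t^{(i)}` of `Top_i(T)`. -/
def ctop (lam : ℕ → ℕ) (T : ℕ × ℕ → ℕ) (i : ℕ) : ℕ :=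
  sInf {c | IsCell lam (rtop lam T i, c) ∧ T (rtop lam T i, c) = i}

/-- The column `c_b^{(i)}` of `Bot_i(T)`. -/
def cbot (lam : ℕ → ℕ) (T : ℕ × ℕ → ℕ) (i : ℕ) : ℕ :=
  sInf {c | IsCell lam (rbot lam T i, c) ∧ T (rbot lam T i, c) = i}

/-- `i` is a descent of `T`. -/
def IsDescent (lam : ℕ → ℕ) (T : ℕ × ℕ → ℕ) (i : ℕ) : Prop :=
  rtop lam T i < rbot lam T (i + 1)

/-- `i` is an attacking descent of `T`. -/
def IsAttacking (lam : ℕ → ℕ) (T : ℕ × ℕ → ℕ) (i : ℕ) : Prop :=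
  IsDescent lam T i ∧
    ((∃ r c, IsCell lam (r, c) ∧ IsCell lam (r + 1, c) ∧ T (r, c) = i ∧ T (r + 1, c) = i + 1) ∨
      (∃ p, IsCell lam p ∧ T p = i + 1 ∧ p.1 ≤ rbot lam T i))

/-- `s_i · T`: exchange the entries `i` and `i+1` of `T`. -/
def swapTab (lam : ℕ → ℕ) (i : ℕ) (T : ℕ × ℕ → ℕ) : ℕ × ℕ → ℕ := fun p =>
  if IsCell lam p then (if T p = i then i + 1 else if T p = i + 1 then i else T p) else 0

/-- The `0`-Hecke operator `π_i` on the free `ℂ`-module on fillings of the diagram of `lam`. -/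
def piOp (lam : ℕ → ℕ) (i : ℕ) :
    ((ℕ × ℕ → ℕ) →₀ ℂ) →ₗ[ℂ] ((ℕ × ℕ → ℕ) →₀ ℂ) :=
  Finsupp.lsum ℂ fun T => LinearMap.toSpanSingleton ℂ ((ℕ × ℕ → ℕ) →₀ ℂ)
    (if ¬ IsDescent lam T i then Finsupp.single T (1 : ℂ)
     else if IsAttacking lam T i then 0
     else Finsupp.single (swapTab lam i T) (1 : ℂ))

/-- The basis vectors of `ℂ · IGLT_m(λ)` inside the ambient free module. -/
def iglSingles (lam : ℕ → ℕ) (m : ℕ) : Set ((ℕ × ℕ → ℕ) →₀ ℂ) :=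
  {f | ∃ T, IsIGLT lam m T ∧ f = Finsupp.single T (1 : ℂ)}

/-! ### Lattice paths `Γ_i(T)` and the equivalence relation `∼` -/

/-- The (extended) entry of the box `p` is `< i`: boxes outside the positive quadrant count
as `-∞`, boxes in the positive quadrant but outside the diagram count as `+∞`. -/
def entryLt (lam : ℕ → ℕ) (T : ℕ × ℕ → ℕ) (i : ℕ) (p : ℕ × ℕ) : Prop :=
  p.1 = 0 ∨ p.2 = 0 ∨ (IsCell lam p ∧ T p < i)

/-- The (extended) entry of the box `p` is `≥ i`. -/
def entryGe (lam : ℕ → ℕ) (T : ℕ × ℕ → ℕ) (i : ℕ) (p : ℕ × ℕ) : Prop :=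
  IsCell lam p → i ≤ T p

/-- One step of the lattice path `Γ_i(T)`: from the lattice point `p = ⟨r,c⟩` either one
step up to `⟨r-1,c⟩` (the left box has entry `< i`, the right box entry `≥ i`) or one step
right to `⟨r,c+1⟩` (the above box has entry `< i`, the below box entry `≥ i`). -/
def gammaStep (lam : ℕ → ℕ) (T : ℕ × ℕ → ℕ) (i : ℕ) (p q : ℕ × ℕ) : Prop :=
  (1 ≤ p.1 ∧ q = (p.1 - 1, p.2) ∧ entryLt lam T i (p.1, p.2) ∧
      entryGe lam T i (p.1, p.2 + 1)) ∨
  (q = (p.1, p.2 + 1) ∧ entryLt lam T i (p.1, p.2 + 1) ∧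
      entryGe lam T i (p.1 + 1, p.2 + 1))

/-- `V` is (the vertex set of) the lattice path `Γ_i(T)`, running from the bottom-left
corner of `Bot_i(T)` to the top-right corner of `Top_i(T)`. -/
def IsGammaPath (lam : ℕ → ℕ) (T : ℕ × ℕ → ℕ) (i : ℕ) (V : Set (ℕ × ℕ)) : Prop :=
  ∃ P : List (ℕ × ℕ), P ≠ [] ∧
    P.head? = some (rbot lam T i, cbot lam T i - 1) ∧
    P.getLast? = some (rtop lam T i - 1, ctop lam T i) ∧
    List.Chain' (gammaStep lam T i) P ∧ V = {p | p ∈ P}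

/-- `i ∈ I(T)`: the entry `i` occupies more than one box of `T`. -/
def hasMultiple (lam : ℕ → ℕ) (T : ℕ × ℕ → ℕ) (i : ℕ) : Prop :=
  ∃ p q, p ≠ q ∧ p ∈ cellsWith lam T i ∧ q ∈ cellsWith lam T i

/-- The set of pairs `(Γ_i(T), T⁻¹(i))` for `i ∈ I(T)`. -/
def gammaData (lam : ℕ → ℕ) (T : ℕ × ℕ → ℕ) : Set (Set (ℕ × ℕ) × Set (ℕ × ℕ)) :=
  {d | ∃ i, hasMultiple lam T i ∧ IsGammaPath lam T i d.1 ∧ d.2 = cellsWith lam T i}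

/-- The equivalence relation `∼` on tableaux. -/
def TabEquiv (lam : ℕ → ℕ) (T₁ T₂ : ℕ × ℕ → ℕ) : Prop :=
  gammaData lam T₁ = gammaData lam T₂

/-! ### Source and sink tableaux -/

def IsSourceTab (lam : ℕ → ℕ) (m : ℕ) (T : ℕ × ℕ → ℕ) : Prop :=
  IsIGLT lam m T ∧
    ¬ ∃ T' i, IsIGLT lam m T' ∧ T' ≠ T ∧ 1 ≤ i ∧ i ≤ m - 1 ∧
      piOp lam i (Finsupp.single T' (1 : ℂ)) = Finsupp.single T (1 : ℂ)

def IsSinkTab (lam : ℕ → ℕ) (m : ℕ) (T : ℕ × ℕ → ℕ) : Prop :=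
  IsIGLT lam m T ∧
    ¬ ∃ T' i, IsIGLT lam m T' ∧ T' ≠ T ∧ 1 ≤ i ∧ i ≤ m - 1 ∧
      piOp lam i (Finsupp.single T (1 : ℂ)) = Finsupp.single T' (1 : ℂ)

/-! ### Permutations, words, length and the left weak Bruhat order -/

def isWordIn (m : ℕ) (w : List ℕ) : Prop := ∀ j ∈ w, 1 ≤ j ∧ j ≤ m - 1

/-- The product `s_{i_p} ⋯ s_{i_2} s_{i_1}` of the simple transpositions indexed by the
word `w = [i_p, …, i_2, i_1]`. -/
def wordProd (w : List ℕ) : Equiv.Perm ℕ := (w.map fun j => Equiv.swap j (j + 1)).prod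

/-- The Coxeter length of `σ` as an element of `S_m`. -/
def permLength (m : ℕ) (σ : Equiv.Perm ℕ) : ℕ :=
  sInf {k | ∃ w, isWordIn m w ∧ wordProd w = σ ∧ w.length = k}

/-- `w` is a reduced word for `σ ∈ S_m`. -/
def IsReducedWord (m : ℕ) (w : List ℕ) (σ : Equiv.Perm ℕ) : Prop :=
  isWordIn m w ∧ wordProd w = σ ∧ w.length = permLength m σ

/-- `i ∈ Des_L(σ)`, i.e. `ℓ(s_i σ) < ℓ(σ)`. -/
def DesL (m : ℕ) (σ : Equiv.Perm ℕ) (i : ℕ) : Prop :=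
  permLength m (Equiv.swap i (i + 1) * σ) < permLength m σ

/-- Covering relation of the left weak Bruhat order: `σ ⋖ s_i σ` for `i ∉ Des_L(σ)`. -/
def weakCovL (m : ℕ) (σ ρ : Equiv.Perm ℕ) : Prop :=
  ∃ i, 1 ≤ i ∧ i ≤ m - 1 ∧ ¬ DesL m σ i ∧ ρ = Equiv.swap i (i + 1) * σ

/-- The left weak Bruhat order `⪯_L` on `S_m`. -/
def weakLe (m : ℕ) : Equiv.Perm ℕ → Equiv.Perm ℕ → Prop :=
  Relation.ReflTransGen (weakCovL m)

/-- The left weak Bruhat interval `[σ, ρ]_L`. -/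
def weakInterval (m : ℕ) (σ ρ : Equiv.Perm ℕ) : Set (Equiv.Perm ℕ) :=
  {γ | weakLe m σ γ ∧ weakLe m γ ρ}

/-- `σ` is a permutation of `{1, …, m}`. -/
def InSymm (m : ℕ) (σ : Equiv.Perm ℕ) : Prop := ∀ x, σ x ≠ x → 1 ≤ x ∧ x ≤ m

/-- `π_{i_p} ⋯ π_{i_2} π_{i_1} (x)` for the word `w = [i_p, …, i_2, i_1]`. -/
def applyWord (lam : ℕ → ℕ) (w : List ℕ) (x : (ℕ × ℕ → ℕ) →₀ ℂ) : (ℕ × ℕ → ℕ) →₀ ℂ :=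
  w.foldr (fun j y => piOp lam j y) x

/-- The partial order `⪯_E`: `T₂ = π_σ (T₁)` for some `σ ∈ S_m`. -/
def precE (lam : ℕ → ℕ) (m : ℕ) (T₁ T₂ : ℕ × ℕ → ℕ) : Prop :=
  ∃ σ w, IsReducedWord m w σ ∧
    applyWord lam w (Finsupp.single T₁ (1 : ℂ)) = Finsupp.single T₂ (1 : ℂ)

/-! ### Blocks `H_j`, reading words and `sfread` -/

/-- The set of descents of `TE` (inside `[1, m-1]`). -/
def descValsAll (lam : ℕ → ℕ) (m : ℕ) (TE : ℕ × ℕ → ℕ) : Set ℕ :=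
  {d | 1 ≤ d ∧ d ≤ m - 1 ∧ IsDescent lam TE d}

/-- `k`, the number of descents of `TE`. -/
def numDesc (lam : ℕ → ℕ) (m : ℕ) (TE : ℕ × ℕ → ℕ) : ℕ := (descValsAll lam m TE).ncard

/-- The index `j` such that `d_{j-1} < v ≤ d_j`. -/
def blockOf (lam : ℕ → ℕ) (m : ℕ) (TE : ℕ × ℕ → ℕ) (v : ℕ) : ℕ :=
  1 + {d | d ∈ descValsAll lam m TE ∧ d < v}.ncard

/-- The horizontal strip `H_j = TE⁻¹([d_{j-1}+1, d_j])`. -/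
def Hset (lam : ℕ → ℕ) (m : ℕ) (TE : ℕ × ℕ → ℕ) (j : ℕ) : Set (ℕ × ℕ) :=
  {p | IsCell lam p ∧ blockOf lam m TE (TE p) = j}

/-- The `(b+1)`-st smallest element of a set of naturals. -/
def nthInf (S : Set ℕ) : ℕ → ℕ
  | 0 => sInf S
  | b + 1 => nthInf {v | v ∈ S ∧ sInf S < v} b

/-- `d_j`, with `d_0 = 0` and `d_{k+1} = m`. -/
def dval (lam : ℕ → ℕ) (m : ℕ) (TE : ℕ × ℕ → ℕ) (j : ℕ) : ℕ :=
  if j = 0 then 0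
  else if numDesc lam m TE < j then m
  else nthInf (descValsAll lam m TE) (j - 1)

/-- The word obtained by reading the entries of `T` on the boxes of `S` from right to
left (i.e. by decreasing column). -/
def stripWord (lam : ℕ → ℕ) (T : ℕ × ℕ → ℕ) (S : Set (ℕ × ℕ)) : List ℕ :=
  (List.range (lam 1 + 1)).reverse.filterMap fun c =>
    if h : ∃ r, (r, c) ∈ S then some (T (sInf {r | (r, c) ∈ S}, c)) else none

/-- The standardized reading word of `T` (as a list): the concatenation over
`j = 1, …, k+1` of the de-duplicated right-to-left readings of `T` on `H_j`. -/
def sfreadList (lam : ℕ → ℕ) (m : ℕ) (TE T : ℕ × ℕ → ℕ) : List ℕ :=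
  ((List.range (numDesc lam m TE + 1)).map fun j0 =>
    (stripWord lam T (Hset lam m TE (j0 + 1))).dedup).flatten

/-- `u` is the one-line notation of `σ ∈ S_m`. -/
def IsOneLineOf (m : ℕ) (u : List ℕ) (σ : Equiv.Perm ℕ) : Prop :=
  InSymm m σ ∧ u.length = m ∧ ∀ j < m, σ (j + 1) = u.getD j 0

/-- The permutation of `S_m` whose one-line notation is `u` (junk value if none exists). -/
def toPerm (m : ℕ) (u : List ℕ) : Equiv.Perm ℕ :=
  if h : ∃ σ, IsOneLineOf m u σ then h.choose else 1

/-- The standardized reading word `sfread(T) ∈ S_m`. -/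
def sfread (lam : ℕ → ℕ) (m : ℕ) (TE T : ℕ × ℕ → ℕ) : Equiv.Perm ℕ :=
  toPerm m (sfreadList lam m TE T)

/-! ### The generalized composition `α_E`, standard ribbon tableaux, and `η` -/

/-- The `j`-th and `(j+1)`-st columns of `rd(α_E)` are connected, i.e.
`Bot_{d_{j-1}+1}(T_E)` is weakly left of `Top_{d_{j+1}}(T_E)`. -/
def connAt (lam : ℕ → ℕ) (m : ℕ) (TE : ℕ × ℕ → ℕ) (j : ℕ) : Prop :=
  cbot lam TE (dval lam m TE (j - 1) + 1) ≤ ctop lam TE (dval lam m TE (j + 1))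

/-- The length `d_j - d_{j-1}` of the `j`-th column of `rd(α_E)`. -/
def colLen (lam : ℕ → ℕ) (m : ℕ) (TE : ℕ × ℕ → ℕ) (j : ℕ) : ℕ :=
  dval lam m TE j - dval lam m TE (j - 1)

/-- The row coordinate (in `ℤ`, increasing downwards) of the top box of the `j`-th column
of the generalized ribbon diagram `rd(α_E)`. -/
def topRowZ (lam : ℕ → ℕ) (m : ℕ) (TE : ℕ × ℕ → ℕ) : ℕ → ℤ
  | 0 => 0
  | 1 => 0
  | j + 2 =>
      (if connAt lam m TE (j + 1) then topRowZ lam m TE (j + 1)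
       else topRowZ lam m TE (j + 1) - 1) - ((colLen lam m TE (j + 2) : ℤ) - 1)

/-- The row coordinate of the `b`-th box from the top of the `j`-th column of `rd(α_E)`. -/
def rowOfBox (lam : ℕ → ℕ) (m : ℕ) (TE : ℕ × ℕ → ℕ) (j b : ℕ) : ℤ :=
  topRowZ lam m TE j + (b : ℤ) - 1

/-- `(j, b)` is a box of `rd(α_E)`: column `j ∈ [1, k+1]`, box `b ∈ [1, d_j - d_{j-1}]`
from the top. -/
def inRangeBox (lam : ℕ → ℕ) (m : ℕ) (TE : ℕ × ℕ → ℕ) (j b : ℕ) : Prop :=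
  1 ≤ j ∧ j ≤ numDesc lam m TE + 1 ∧ 1 ≤ b ∧ b ≤ colLen lam m TE j

/-- `F` is a standard ribbon tableau of shape `α_E` (encoded by column and position from
the top; normalized to `0` outside `rd(α_E)`). -/
def IsSRT (lam : ℕ → ℕ) (m : ℕ) (TE : ℕ × ℕ → ℕ) (F : ℕ → ℕ → ℕ) : Prop :=
  (∀ j b, ¬ inRangeBox lam m TE j b → F j b = 0) ∧
  (∀ j b, inRangeBox lam m TE j b → 1 ≤ F j b ∧ F j b ≤ m) ∧
  (∀ v, 1 ≤ v → v ≤ m →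
    ∃! q : ℕ × ℕ, inRangeBox lam m TE q.1 q.2 ∧ F q.1 q.2 = v) ∧
  (∀ j b, inRangeBox lam m TE j b → inRangeBox lam m TE j (b + 1) → F j b < F j (b + 1)) ∧
  (∀ j, 1 ≤ j → j ≤ numDesc lam m TE → connAt lam m TE j →
    F j 1 < F (j + 1) (colLen lam m TE (j + 1)))

/-- The position (1-based, from the left) of the box `p` within the strip `H_j` counted
so that it increases by one along each connected component and repeats across breaks. -/
def idxIn (lam : ℕ → ℕ) (m : ℕ) (TE : ℕ × ℕ → ℕ) (j : ℕ) (p : ℕ × ℕ) : ℕ :=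
  1 + {q | q ∈ Hset lam m TE j ∧ q.2 < p.2 ∧ (q.1, q.2 + 1) ∈ Hset lam m TE j}.ncard

/-- The filling `T_𝒯` of the Young diagram of `lam` associated to an SRT `F`. -/
def Tfill (lam : ℕ → ℕ) (m : ℕ) (TE : ℕ × ℕ → ℕ) (F : ℕ → ℕ → ℕ) : ℕ × ℕ → ℕ := fun p =>
  if IsCell lam p then
    F (blockOf lam m TE (TE p)) (idxIn lam m TE (blockOf lam m TE (TE p)) p)
  else 0

/-- The linear map `η : ℂ·SRT(α_E) → ℂ·E`, `𝒯 ↦ T_𝒯` if `T_𝒯 ∈ E` and `𝒯 ↦ 0` otherwise. -/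
def etaMap (lam : ℕ → ℕ) (m : ℕ) (TE : ℕ × ℕ → ℕ) :
    ((ℕ → ℕ → ℕ) →₀ ℂ) →ₗ[ℂ] ((ℕ × ℕ → ℕ) →₀ ℂ) :=
  Finsupp.lsum ℂ fun F => LinearMap.toSpanSingleton ℂ ((ℕ × ℕ → ℕ) →₀ ℂ)
    (if IsSRT lam m TE F ∧ IsIGLT lam m (Tfill lam m TE F) ∧
        TabEquiv lam TE (Tfill lam m TE F)
     then Finsupp.single (Tfill lam m TE F) (1 : ℂ) else 0)

/-- The set of values of `T` on the strip `H_j`. -/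
def valSet (lam : ℕ → ℕ) (m : ℕ) (TE T : ℕ × ℕ → ℕ) (j : ℕ) : Set ℕ :=
  {v | ∃ p ∈ Hset lam m TE j, T p = v}

/-- The standard ribbon tableau `𝒯_T` whose `j`-th column consists of the values of `T`
on `H_j`, increasing from top to bottom. -/
def canonSRT (lam : ℕ → ℕ) (m : ℕ) (TE T : ℕ × ℕ → ℕ) : ℕ → ℕ → ℕ := fun j b =>
  if inRangeBox lam m TE j b then nthInf (valSet lam m TE T j) (b - 1) else 0

/-- `s_i · F`: exchange the entries `i` and `i+1` of a standard ribbon tableau. -/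
def swapSRT (i : ℕ) (F : ℕ → ℕ → ℕ) : ℕ → ℕ → ℕ := fun j b =>
  if F j b = i then i + 1 else if F j b = i + 1 then i else F j b

/-- `i` appears strictly above `i+1` in `F`. -/
def aboveIn (lam : ℕ → ℕ) (m : ℕ) (TE : ℕ × ℕ → ℕ) (F : ℕ → ℕ → ℕ) (i : ℕ) : Prop :=
  ∃ j b j' b', inRangeBox lam m TE j b ∧ inRangeBox lam m TE j' b' ∧
    F j b = i ∧ F j' b' = i + 1 ∧ rowOfBox lam m TE j b < rowOfBox lam m TE j' b'

/-- `i` and `i+1` lie in the same row of `F`. -/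
def sameRowIn (lam : ℕ → ℕ) (m : ℕ) (TE : ℕ × ℕ → ℕ) (F : ℕ → ℕ → ℕ) (i : ℕ) : Prop :=
  ∃ j b j' b', inRangeBox lam m TE j b ∧ inRangeBox lam m TE j' b' ∧
    F j b = i ∧ F j' b' = i + 1 ∧ rowOfBox lam m TE j b = rowOfBox lam m TE j' b'

/-- The `0`-Hecke operator `π_i` on `ℂ·SRT(α_E)` (inside the ambient free module). -/
def piSRT (lam : ℕ → ℕ) (m : ℕ) (TE : ℕ × ℕ → ℕ) (i : ℕ) :
    ((ℕ → ℕ → ℕ) →₀ ℂ) →ₗ[ℂ] ((ℕ → ℕ → ℕ) →₀ ℂ) :=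
  Finsupp.lsum ℂ fun F => LinearMap.toSpanSingleton ℂ ((ℕ → ℕ → ℕ) →₀ ℂ)
    (if aboveIn lam m TE F i then Finsupp.single F (1 : ℂ)
     else if sameRowIn lam m TE F i then 0
     else Finsupp.single (swapSRT i F) (1 : ℂ))

/-! ### Weak Bruhat interval modules -/

/-- The `0`-Hecke operator `π_i` of the weak Bruhat interval module `B(σ, ρ)`. -/
def piB (m : ℕ) (σ ρ : Equiv.Perm ℕ) (i : ℕ) :
    (Equiv.Perm ℕ →₀ ℂ) →ₗ[ℂ] (Equiv.Perm ℕ →₀ ℂ) :=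
  Finsupp.lsum ℂ fun γ => LinearMap.toSpanSingleton ℂ (Equiv.Perm ℕ →₀ ℂ)
    (if DesL m γ i then Finsupp.single γ (1 : ℂ)
     else if Equiv.swap i (i + 1) * γ ∈ weakInterval m σ ρ then
       Finsupp.single (Equiv.swap i (i + 1) * γ) (1 : ℂ)
     else 0)

/-- The projection `pr : B(σ, ρ) → B(σ, ρ')`. -/
def prMap (m : ℕ) (σ ρ' : Equiv.Perm ℕ) :
    (Equiv.Perm ℕ →₀ ℂ) →ₗ[ℂ] (Equiv.Perm ℕ →₀ ℂ) :=
  Finsupp.lsum ℂ fun γ => LinearMap.toSpanSingleton ℂ (Equiv.Perm ℕ →₀ ℂ)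
    (if γ ∈ weakInterval m σ ρ' then Finsupp.single γ (1 : ℂ) else 0)

/-- The linear map `ℂ·E → B(sfread(T_E), sfread(T'_E))`, `T ↦ sfread(T)`. -/
def thetaMap (lam : ℕ → ℕ) (m : ℕ) (TE : ℕ × ℕ → ℕ) :
    ((ℕ × ℕ → ℕ) →₀ ℂ) →ₗ[ℂ] (Equiv.Perm ℕ →₀ ℂ) :=
  Finsupp.lsum ℂ fun T => LinearMap.toSpanSingleton ℂ (Equiv.Perm ℕ →₀ ℂ)
    (if IsIGLT lam m T ∧ TabEquiv lam TE T then
      Finsupp.single (sfread lam m TE T) (1 : ℂ) else 0)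

/-! ### `itread`, `w₀` of parabolic subgroups and `𝒯^⊙_{α_E}` -/

/-- `σ` lies in the subgroup generated by `{s_j : j ∈ S}`. -/
def genBy (S : Set ℕ) (σ : Equiv.Perm ℕ) : Prop :=
  ∃ w : List ℕ, (∀ j ∈ w, j ∈ S) ∧ wordProd w = σ

/-- The longest element of the parabolic subgroup of `S_m` generated by `{s_j : j ∈ S}`. -/
def longestIn (m : ℕ) (S : Set ℕ) : Equiv.Perm ℕ :=
  if h : ∃ σ, genBy S σ ∧ ∀ τ, genBy S τ → permLength m τ ≤ permLength m σ then h.choose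
  else 1

/-- `set((α_E)_⊙) = {d_j : 1 ≤ j ≤ k, columns j and j+1 connected}`. -/
def odotSet (lam : ℕ → ℕ) (m : ℕ) (TE : ℕ × ℕ → ℕ) : Set ℕ :=
  {d | ∃ j, 1 ≤ j ∧ j ≤ numDesc lam m TE ∧ connAt lam m TE j ∧ d = dval lam m TE j}

/-- `set(((α_E)_⊙)^c) = [1, m-1] \ set((α_E)_⊙)`. -/
def odotComplSet (lam : ℕ → ℕ) (m : ℕ) (TE : ℕ × ℕ → ℕ) : Set ℕ :=
  {i | 1 ≤ i ∧ i ≤ m - 1 ∧ i ∉ odotSet lam m TE}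

/-- The reading word `itread(F)` of an SRT of shape `α_E`: entries from left to right,
starting with the bottom row and proceeding upwards. -/
def itreadList (lam : ℕ → ℕ) (m : ℕ) (TE : ℕ × ℕ → ℕ) (F : ℕ → ℕ → ℕ) : List ℕ :=
  let k := numDesc lam m TE
  let rmax : ℤ := (colLen lam m TE 1 : ℤ) - 1
  let rmin : ℤ := topRowZ lam m TE (k + 1)
  ((List.range (rmax - rmin + 1).toNat).map fun t =>
    (List.range (k + 1)).filterMap fun j0 =>
      let j := j0 + 1
      let b : ℤ := (rmax - t) - topRowZ lam m TE j + 1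
      if 1 ≤ b ∧ b ≤ (colLen lam m TE j : ℤ) then some (F j b.toNat) else none).flatten

/-- The one-line notation of `σ ∈ S_m`. -/
def oneLineList (m : ℕ) (σ : Equiv.Perm ℕ) : List ℕ :=
  (List.range m).map fun t => σ (t + 1)


/-! ### Auxiliary lemmas for Statement 4 -/

section Aux4

variable {lam : ℕ → ℕ} {m n i : ℕ} {T : ℕ × ℕ → ℕ}

lemma swap_val (p : ℕ × ℕ) (hc : IsCell lam p) :
    swapTab lam i T p = if T p = i then i + 1 else if T p = i + 1 then i else T p := by
  simp [swapTab, hc]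

lemma cellsWith_swap₁ :
    cellsWith lam (swapTab lam i T) (i + 1) = cellsWith lam T i := by
  ext p
  simp only [cellsWith, Set.mem_setOf_eq]
  refine and_congr_right fun hc => ?_
  rw [swap_val p hc]; split_ifs <;> omega

lemma cellsWith_swap₂ :
    cellsWith lam (swapTab lam i T) i = cellsWith lam T (i + 1) := by
  ext p
  simp only [cellsWith, Set.mem_setOf_eq]
  refine and_congr_right fun hc => ?_
  rw [swap_val p hc]; split_ifs <;> omega

lemma cellsWith_swap₃ {j : ℕ} (hj : j ≠ i) (hj' : j ≠ i + 1) :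
    cellsWith lam (swapTab lam i T) j = cellsWith lam T j := by
  ext p
  simp only [cellsWith, Set.mem_setOf_eq]
  refine and_congr_right fun hc => ?_
  rw [swap_val p hc]; split_ifs <;> omega

lemma hasMultiple_congr {T₁ T₂ : ℕ × ℕ → ℕ} {j₁ j₂ : ℕ}
    (h : cellsWith lam T₁ j₁ = cellsWith lam T₂ j₂) :
    hasMultiple lam T₁ j₁ ↔ hasMultiple lam T₂ j₂ := by
  unfold hasMultiple; rw [h]

lemma rowSet_congr {T₁ T₂ : ℕ × ℕ → ℕ} {j₁ j₂ : ℕ}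
    (h : cellsWith lam T₁ j₁ = cellsWith lam T₂ j₂) :
    rowSet lam T₁ j₁ = rowSet lam T₂ j₂ := by
  ext r
  simp only [rowSet, Set.mem_setOf_eq]
  constructor <;> rintro ⟨c, hc⟩ <;> refine ⟨c, ?_⟩
  · exact (Set.ext_iff.mp h (r, c)).1 hc
  · exact (Set.ext_iff.mp h (r, c)).2 hc

lemma rbot_congr {T₁ T₂ : ℕ × ℕ → ℕ} {j₁ j₂ : ℕ}
    (h : cellsWith lam T₁ j₁ = cellsWith lam T₂ j₂) :
    rbot lam T₁ j₁ = rbot lam T₂ j₂ := by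
  unfold rbot; rw [rowSet_congr h]

lemma rtop_congr {T₁ T₂ : ℕ × ℕ → ℕ} {j₁ j₂ : ℕ}
    (h : cellsWith lam T₁ j₁ = cellsWith lam T₂ j₂) :
    rtop lam T₁ j₁ = rtop lam T₂ j₂ := by
  unfold rtop; rw [rowSet_congr h]

lemma cbot_congr {T₁ T₂ : ℕ × ℕ → ℕ} {j₁ j₂ : ℕ}
    (h : cellsWith lam T₁ j₁ = cellsWith lam T₂ j₂) :
    cbot lam T₁ j₁ = cbot lam T₂ j₂ := by
  unfold cbot
  rw [rbot_congr h]
  congr 1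
  ext c
  exact Set.ext_iff.mp h (rbot lam T₂ j₂, c)

lemma ctop_congr {T₁ T₂ : ℕ × ℕ → ℕ} {j₁ j₂ : ℕ}
    (h : cellsWith lam T₁ j₁ = cellsWith lam T₂ j₂) :
    ctop lam T₁ j₁ = ctop lam T₂ j₂ := by
  unfold ctop
  rw [rtop_congr h]
  congr 1
  ext c
  exact Set.ext_iff.mp h (rtop lam T₂ j₂, c)

lemma chain'_iff_of_inv {α : Type*} {R R' : α → α → Prop} {Inv : α → Prop}
    (hR : ∀ p q, Inv p → R p q → Inv q)
    (hiff : ∀ p q, Inv p → (R p q ↔ R' p q)) :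
    ∀ (P : List α), (∀ a, P.head? = some a → Inv a) →
      (List.Chain' R P ↔ List.Chain' R' P) := by
  intro P
  induction P with
  | nil => intro _; simp [List.Chain']
  | cons a t ih =>
    intro h
    have ha : Inv a := h a rfl
    cases t with
    | nil => simp [List.Chain']
    | cons b t' =>
      simp only [List.Chain', List.isChain_cons_cons]
      have hih : Inv b → (List.Chain' R (b :: t') ↔ List.Chain' R' (b :: t')) := by
        intro hb'
        refine ih fun x hx => ?_
        simp only [List.head?_cons, Option.some.injEq] at hx
        subst hx; exact hb'
      constructor
      · rintro ⟨h1, h2⟩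
        exact ⟨(hiff a b ha).1 h1, (hih (hR a b ha h1)).1 h2⟩
      · rintro ⟨h1, h2⟩
        have h1' := (hiff a b ha).2 h1
        exact ⟨h1', (hih (hR a b ha h1')).2 h2⟩

lemma chain'_flip_reverse {α : Type*} {R : α → α → Prop} {P : List α} :
    List.Chain' (flip R) P.reverse ↔ List.Chain' R P := by
  simp only [List.Chain']; rw [List.isChain_reverse]; exact Iff.rfl

lemma row_mono (hT : IsIGLT lam m T) :
    ∀ r c c', 1 ≤ c → c ≤ c' → IsCell lam (r, c') → T (r, c) ≤ T (r, c') := by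
  intro r c c' h1 h2
  induction c', h2 using Nat.le_induction with
  | base => intro _; exact le_rfl
  | succ c' hc ih =>
    intro hcell
    have hcell' : IsCell lam (r, c') := ⟨hcell.1, by omega, by have := hcell.2.2; simp at this ⊢; omega⟩
    exact le_trans (ih hcell') (le_of_lt (hT.2.2.1 r c' hcell' hcell))

end Aux4
section Aux4b

variable {lam : ℕ → ℕ} {m n i : ℕ} {T : ℕ × ℕ → ℕ}

lemma step_iff₁ (hi1 : 1 ≤ i)
    (HB : ∀ p : ℕ × ℕ, IsCell lam p → T p = i + 1 → rbot lam T i < p.1)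
    (hbc : IsCell lam (rbot lam T i, cbot lam T i))
    (hbe : T (rbot lam T i, cbot lam T i) = i)
    (hmono : ∀ r c c', 1 ≤ c → c ≤ c' → IsCell lam (r, c') → T (r, c) ≤ T (r, c'))
    (p q : ℕ × ℕ) (hp1 : p.1 ≤ rbot lam T i) (hp2 : cbot lam T i - 1 ≤ p.2) :
    gammaStep lam T i p q ↔ gammaStep lam (swapTab lam i T) (i + 1) p q := by
  set rB := rbot lam T i with hrB
  set cB := cbot lam T i with hcB
  have hcB1 : 1 ≤ cB := hbc.2.1
  have hrB1 : 1 ≤ rB := hbc.1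
  -- entryLt transfer on rows ≤ rB
  have hlt : ∀ b : ℕ × ℕ, b.1 ≤ rB →
      (entryLt lam T i b ↔ entryLt lam (swapTab lam i T) (i + 1) b) := by
    intro b hb
    unfold entryLt
    refine or_congr Iff.rfl (or_congr Iff.rfl (and_congr_right fun hc => ?_))
    rw [swap_val b hc]
    split_ifs with h1 h2
    · omega
    · have := HB b hc h2; omega
    · omega
  -- entryGe transfer on rows ≤ rB
  have hge : ∀ b : ℕ × ℕ, b.1 ≤ rB →
      (entryGe lam T i b ↔ entryGe lam (swapTab lam i T) (i + 1) b) := by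
    intro b hb
    unfold entryGe
    constructor <;> intro h hc <;> have hh := h hc <;> rw [swap_val b hc] at *
    · split_ifs with h1 h2
      · omega
      · have := HB b hc h2; omega
      · omega
    · split_ifs at hh <;> omega
  -- no right step at row rB
  have hrt : ∀ c : ℕ, cB - 1 ≤ c →
      ¬ entryLt lam T i (rB, c + 1) ∧ ¬ entryLt lam (swapTab lam i T) (i + 1) (rB, c + 1) := by
    intro c hc
    have hc1 : cB ≤ c + 1 := by omega
    have key : ∀ h : IsCell lam (rB, c + 1), i ≤ T (rB, c + 1) := by
      intro h
      calc i = T (rB, cB) := hbe.symm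
        _ ≤ T (rB, c + 1) := hmono rB cB (c + 1) hcB1 hc1 h
    constructor
    · rintro (h0 | h0 | ⟨hcell, hlt'⟩)
      · simp at h0; omega
      · simp at h0
      · have := key hcell; omega
    · rintro (h0 | h0 | ⟨hcell, hlt'⟩)
      · simp at h0; omega
      · simp at h0
      · have hk := key hcell
        rw [swap_val _ hcell] at hlt'
        split_ifs at hlt' with h1 h2
        · omega
        · have := HB _ hcell h2; simp at this
        · omega
    done
  unfold gammaStep
  constructor
  · rintro (⟨h1, hq, hL, hG⟩ | ⟨hq, hL, hG⟩)
    · exact Or.inl ⟨h1, hq, (hlt (p.1, p.2) hp1).1 hL, (hge (p.1, p.2 + 1) hp1).1 hG⟩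
    · rcases lt_or_eq_of_le hp1 with h | h
      · exact Or.inr ⟨hq, (hlt (p.1, p.2 + 1) hp1).1 hL,
          (hge (p.1 + 1, p.2 + 1) (by simpa using h)).1 hG⟩
      · exact absurd (show entryLt lam T i (rB, p.2 + 1) by rw [← h]; exact hL)
          (hrt p.2 hp2).1
  · rintro (⟨h1, hq, hL, hG⟩ | ⟨hq, hL, hG⟩)
    · exact Or.inl ⟨h1, hq, (hlt (p.1, p.2) hp1).2 hL, (hge (p.1, p.2 + 1) hp1).2 hG⟩
    · rcases lt_or_eq_of_le hp1 with h | h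
      · exact Or.inr ⟨hq, (hlt (p.1, p.2 + 1) hp1).2 hL,
          (hge (p.1 + 1, p.2 + 1) (by simpa using h)).2 hG⟩
      · exact absurd (show entryLt lam (swapTab lam i T) (i + 1) (rB, p.2 + 1) by
          rw [← h]; exact hL) (hrt p.2 hp2).2

end Aux4b
section Aux4c

variable {lam : ℕ → ℕ} {m n i : ℕ} {T : ℕ × ℕ → ℕ}

lemma step_iff₂ (hi1 : 1 ≤ i)
    (HA : ∀ p : ℕ × ℕ, IsCell lam p → T p = i → p.1 ≤ rbot lam T i)
    (HC : ¬ ∃ r c, IsCell lam (r, c) ∧ IsCell lam (r + 1, c) ∧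
        T (r, c) = i ∧ T (r + 1, c) = i + 1)
    (he : rbot lam T i < rtop lam T (i + 1))
    (htc : IsCell lam (rtop lam T (i + 1), ctop lam T (i + 1)))
    (hte : T (rtop lam T (i + 1), ctop lam T (i + 1)) = i + 1)
    (hmono : ∀ r c c', 1 ≤ c → c ≤ c' → IsCell lam (r, c') → T (r, c) ≤ T (r, c'))
    (p q : ℕ × ℕ) (hq1 : rtop lam T (i + 1) - 1 ≤ q.1) (hq2 : q.2 ≤ ctop lam T (i + 1)) :
    gammaStep lam T (i + 1) p q ↔ gammaStep lam (swapTab lam i T) i p q := by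
  set e := rtop lam T (i + 1) with hee
  set ce := ctop lam T (i + 1) with hce
  have he1 : 1 ≤ e := by omega
  -- lt transfer, forward, on rows ≥ e
  have hltA : ∀ b : ℕ × ℕ, e ≤ b.1 → entryLt lam T (i + 1) b →
      entryLt lam (swapTab lam i T) i b := by
    rintro b hb (h0 | h0 | ⟨hcell, hlt'⟩)
    · exact Or.inl h0
    · exact Or.inr (Or.inl h0)
    · refine Or.inr (Or.inr ⟨hcell, ?_⟩)
      have hni : T b ≠ i := fun h => by have := HA b hcell h; omega
      rw [swap_val b hcell]
      split_ifs <;> omega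
  -- lt transfer, backward, unconditional
  have hltB : ∀ b : ℕ × ℕ, entryLt lam (swapTab lam i T) i b → entryLt lam T (i + 1) b := by
    rintro b (h0 | h0 | ⟨hcell, hlt'⟩)
    · exact Or.inl h0
    · exact Or.inr (Or.inl h0)
    · refine Or.inr (Or.inr ⟨hcell, ?_⟩)
      rw [swap_val b hcell] at hlt'
      split_ifs at hlt' <;> omega
  -- ge transfer, forward, unconditional
  have hgeA : ∀ b : ℕ × ℕ, entryGe lam T (i + 1) b → entryGe lam (swapTab lam i T) i b := by
    intro b h hc
    have := h hc
    rw [swap_val b hc]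
    split_ifs <;> omega
  -- ge transfer, backward, on rows ≥ e
  have hgeB : ∀ b : ℕ × ℕ, e ≤ b.1 → entryGe lam (swapTab lam i T) i b →
      entryGe lam T (i + 1) b := by
    intro b hb h hc
    have hh := h hc
    have hni : T b ≠ i := fun h' => by have := HA b hc h'; omega
    rw [swap_val b hc] at hh
    split_ifs at hh <;> omega
  -- the bad right-step at row e - 1 is impossible
  have hbad : ∀ c : ℕ, 1 ≤ c → c ≤ ce → IsCell lam (e - 1, c) → T (e - 1, c) = i →
      entryGe lam T (i + 1) (e, c) → False := by
    intro c hc1 hc2 hcell hTc hG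
    have hcell2 : IsCell lam (e, c) := ⟨he1, hc1, le_trans hc2 htc.2.2⟩
    have hge' : i + 1 ≤ T (e, c) := hG hcell2
    have hne : T (e, c) ≠ i + 1 := by
      intro h
      exact HC ⟨e - 1, c, hcell, by rwa [Nat.sub_add_cancel he1], hTc,
        by rwa [Nat.sub_add_cancel he1]⟩
    have : T (e, c) ≤ T (e, ce) := hmono e c ce hc1 hc2 htc
    omega
  unfold gammaStep
  constructor
  · rintro (⟨h1, hq, hL, hG⟩ | ⟨hq, hL, hG⟩)
    · -- up step: p.1 = q.1 + 1 ≥ e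
      have hp1 : e ≤ p.1 := by
        have : q.1 = p.1 - 1 := by rw [hq]
        omega
      exact Or.inl ⟨h1, hq, hltA (p.1, p.2) hp1 hL, hgeA (p.1, p.2 + 1) hG⟩
    · -- right step: p.1 = q.1 ≥ e - 1
      have hpq1 : q.1 = p.1 := by rw [hq]
      have hpq2 : q.2 = p.2 + 1 := by rw [hq]
      refine Or.inr ⟨hq, ?_, hgeA (p.1 + 1, p.2 + 1) hG⟩
      rcases lt_or_eq_of_le (show e - 1 ≤ p.1 by omega) with h | h
      · exact hltA (p.1, p.2 + 1) (by simp; omega) hL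
      · -- p.1 = e - 1
        rcases hL with h0 | h0 | ⟨hcell, hlt'⟩
        · exact Or.inl h0
        · exact Or.inr (Or.inl h0)
        · refine Or.inr (Or.inr ⟨hcell, ?_⟩)
          have hni : T (p.1, p.2 + 1) ≠ i := by
            intro hTc
            refine hbad (p.2 + 1) (by omega) (by omega) (by rwa [h]) (by rwa [h]) ?_
            have : (e, p.2 + 1) = (p.1 + 1, p.2 + 1) := by
              rw [Prod.mk.injEq]; omega
            rw [this]
            exact hG
          rw [swap_val _ hcell]
          split_ifs <;> omega
  · rintro (⟨h1, hq, hL, hG⟩ | ⟨hq, hL, hG⟩)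
    · have hp1 : e ≤ p.1 := by
        have : q.1 = p.1 - 1 := by rw [hq]
        omega
      exact Or.inl ⟨h1, hq, hltB (p.1, p.2) hL, hgeB (p.1, p.2 + 1) hp1 hG⟩
    · have hpq1 : q.1 = p.1 := by rw [hq]
      exact Or.inr ⟨hq, hltB (p.1, p.2 + 1) hL,
        hgeB (p.1 + 1, p.2 + 1) (by simp; omega) hG⟩

end Aux4c
section Aux4d

variable {lam : ℕ → ℕ} {m n i : ℕ} {T : ℕ × ℕ → ℕ}

lemma entryLt_swap₃ {j : ℕ} (hj : j ≠ i) (hj' : j ≠ i + 1) (b : ℕ × ℕ) :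
    entryLt lam (swapTab lam i T) j b ↔ entryLt lam T j b := by
  unfold entryLt
  refine or_congr Iff.rfl (or_congr Iff.rfl (and_congr_right fun hc => ?_))
  rw [swap_val b hc]; split_ifs <;> omega

lemma entryGe_swap₃ {j : ℕ} (hj : j ≠ i) (hj' : j ≠ i + 1) (b : ℕ × ℕ) :
    entryGe lam (swapTab lam i T) j b ↔ entryGe lam T j b := by
  unfold entryGe
  constructor <;> intro h hc <;> have hh := h hc
  · rw [swap_val b hc] at hh; split_ifs at hh <;> omega
  · rw [swap_val b hc]; split_ifs <;> omega

lemma step_iff₃ {j : ℕ} (hj : j ≠ i) (hj' : j ≠ i + 1) (p q : ℕ × ℕ) :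
    gammaStep lam (swapTab lam i T) j p q ↔ gammaStep lam T j p q := by
  unfold gammaStep
  rw [entryLt_swap₃ hj hj', entryGe_swap₃ hj hj', entryLt_swap₃ hj hj',
    entryGe_swap₃ hj hj']

lemma path_iff₃ {j : ℕ} (hj : j ≠ i) (hj' : j ≠ i + 1) (V : Set (ℕ × ℕ)) :
    IsGammaPath lam T j V ↔ IsGammaPath lam (swapTab lam i T) j V := by
  have hcw : cellsWith lam (swapTab lam i T) j = cellsWith lam T j := cellsWith_swap₃ hj hj'
  unfold IsGammaPath
  rw [rbot_congr hcw, cbot_congr hcw, rtop_congr hcw, ctop_congr hcw]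
  constructor <;> rintro ⟨P, hP0, hP1, hP2, hP3, hP4⟩ <;> refine ⟨P, hP0, hP1, hP2, ?_, hP4⟩
  · exact hP3.imp fun {a b} h => (step_iff₃ hj hj' a b).2 h
  · exact hP3.imp fun {a b} h => (step_iff₃ hj hj' a b).1 h

lemma path_iff₁ (hi1 : 1 ≤ i)
    (HB : ∀ p : ℕ × ℕ, IsCell lam p → T p = i + 1 → rbot lam T i < p.1)
    (hbc : IsCell lam (rbot lam T i, cbot lam T i))
    (hbe : T (rbot lam T i, cbot lam T i) = i)
    (hmono : ∀ r c c', 1 ≤ c → c ≤ c' → IsCell lam (r, c') → T (r, c) ≤ T (r, c'))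
    (V : Set (ℕ × ℕ)) :
    IsGammaPath lam T i V ↔ IsGammaPath lam (swapTab lam i T) (i + 1) V := by
  have hcw : cellsWith lam (swapTab lam i T) (i + 1) = cellsWith lam T i := cellsWith_swap₁
  have hchain : ∀ P : List (ℕ × ℕ),
      P.head? = some (rbot lam T i, cbot lam T i - 1) →
      (List.Chain' (gammaStep lam T i) P ↔
        List.Chain' (gammaStep lam (swapTab lam i T) (i + 1)) P) := by
    intro P hP
    refine chain'_iff_of_inv (Inv := fun p => p.1 ≤ rbot lam T i ∧ cbot lam T i - 1 ≤ p.2)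
      ?_ ?_ P ?_
    · rintro p q ⟨h1, h2⟩ (⟨_, hq, _, _⟩ | ⟨hq, _, _⟩) <;>
        · rw [hq]; constructor <;> simp <;> omega
    · intro p q hp
      exact step_iff₁ hi1 HB hbc hbe hmono p q hp.1 hp.2
    · intro a ha
      rw [hP] at ha
      cases ha
      exact ⟨le_rfl, le_rfl⟩
  unfold IsGammaPath
  rw [rbot_congr hcw, cbot_congr hcw, rtop_congr hcw, ctop_congr hcw]
  constructor <;> rintro ⟨P, hP0, hP1, hP2, hP3, hP4⟩ <;> refine ⟨P, hP0, hP1, hP2, ?_, hP4⟩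
  · exact (hchain P hP1).1 hP3
  · exact (hchain P hP1).2 hP3

lemma path_iff₂ (hi1 : 1 ≤ i)
    (HA : ∀ p : ℕ × ℕ, IsCell lam p → T p = i → p.1 ≤ rbot lam T i)
    (HC : ¬ ∃ r c, IsCell lam (r, c) ∧ IsCell lam (r + 1, c) ∧
        T (r, c) = i ∧ T (r + 1, c) = i + 1)
    (he : rbot lam T i < rtop lam T (i + 1))
    (htc : IsCell lam (rtop lam T (i + 1), ctop lam T (i + 1)))
    (hte : T (rtop lam T (i + 1), ctop lam T (i + 1)) = i + 1)
    (hmono : ∀ r c c', 1 ≤ c → c ≤ c' → IsCell lam (r, c') → T (r, c) ≤ T (r, c'))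
    (V : Set (ℕ × ℕ)) :
    IsGammaPath lam T (i + 1) V ↔ IsGammaPath lam (swapTab lam i T) i V := by
  have hcw : cellsWith lam (swapTab lam i T) i = cellsWith lam T (i + 1) := cellsWith_swap₂
  have hchain : ∀ P : List (ℕ × ℕ),
      P.getLast? = some (rtop lam T (i + 1) - 1, ctop lam T (i + 1)) →
      (List.Chain' (gammaStep lam T (i + 1)) P ↔
        List.Chain' (gammaStep lam (swapTab lam i T) i) P) := by
    intro P hP
    rw [← chain'_flip_reverse (R := gammaStep lam T (i + 1)),
      ← chain'_flip_reverse (R := gammaStep lam (swapTab lam i T) i)]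
    refine chain'_iff_of_inv
      (Inv := fun p => rtop lam T (i + 1) - 1 ≤ p.1 ∧ p.2 ≤ ctop lam T (i + 1))
      ?_ ?_ P.reverse ?_
    · rintro x y ⟨h1, h2⟩ hxy
      rcases hxy with (⟨hy1, hq, -, -⟩ | ⟨hq, -, -⟩) <;>
        · obtain ⟨e1, e2⟩ := Prod.ext_iff.mp hq
          simp only [] at e1 e2
          constructor <;> omega
    · intro x y hx
      exact step_iff₂ hi1 HA HC he htc hte hmono y x hx.1 hx.2
    · intro a ha
      rw [List.head?_reverse, hP] at ha
      cases ha
      exact ⟨le_rfl, le_rfl⟩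
  unfold IsGammaPath
  rw [rbot_congr hcw, cbot_congr hcw, rtop_congr hcw, ctop_congr hcw]
  constructor <;> rintro ⟨P, hP0, hP1, hP2, hP3, hP4⟩ <;> refine ⟨P, hP0, hP1, hP2, ?_, hP4⟩
  · exact (hchain P hP2).1 hP3
  · exact (hchain P hP2).2 hP3

end Aux4d
section Aux4e

variable {lam : ℕ → ℕ} {m n i : ℕ} {T : ℕ × ℕ → ℕ}

lemma bddAbove_rowSet (hlam : IsPartitionOf n lam) (j : ℕ) :
    BddAbove (rowSet lam T j) := by
  refine ⟨n, fun r hr => ?_⟩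
  obtain ⟨c, hc, -⟩ := hr
  by_contra h
  push_neg at h
  have h0 := hlam.2.1 r (by omega)
  have h1 : 1 ≤ c := hc.2.1
  have h2 : c ≤ lam r := hc.2.2
  omega

lemma isIGLT_swap (hm : 1 ≤ m) (hi1 : 1 ≤ i) (him : i + 1 ≤ m) (hT : IsIGLT lam m T)
    (HA : ∀ p : ℕ × ℕ, IsCell lam p → T p = i → p.1 ≤ rbot lam T i)
    (HB : ∀ p : ℕ × ℕ, IsCell lam p → T p = i + 1 → rbot lam T i < p.1)
    (HC : ¬ ∃ r c, IsCell lam (r, c) ∧ IsCell lam (r + 1, c) ∧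
        T (r, c) = i ∧ T (r + 1, c) = i + 1) :
    IsIGLT lam m (swapTab lam i T) := by
  obtain ⟨h0, h1, h2, h3, h4⟩ := hT
  refine ⟨?_, ?_, ?_, ?_, ?_⟩
  · intro p hp; simp [swapTab, hp]
  · intro p hp
    have := h1 p hp
    rw [swap_val p hp]
    split_ifs <;> omega
  · intro r c hc1 hc2
    have hlt := h2 r c hc1 hc2
    have hne : T (r, c) = i → T (r, c + 1) ≠ i + 1 := by
      intro ha hb
      have := HA (r, c) hc1 ha
      have := HB (r, c + 1) hc2 hb
      simp at *
      omega
    rw [swap_val _ hc1, swap_val _ hc2]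
    by_cases hA : T (r, c) = i
    · have := hne hA
      split_ifs <;> omega
    · split_ifs <;> omega
  · intro r c hc1 hc2
    have hlt := h3 r c hc1 hc2
    have hne : T (r, c) = i → T (r + 1, c) ≠ i + 1 := by
      intro ha hb
      exact HC ⟨r, c, hc1, hc2, ha, hb⟩
    rw [swap_val _ hc1, swap_val _ hc2]
    by_cases hA : T (r, c) = i
    · have := hne hA
      split_ifs <;> omega
    · split_ifs <;> omega
  · intro k hk1 hk2
    by_cases hki : k = i
    · obtain ⟨p, hp, hpe⟩ := h4 (i + 1) (by omega) him
      refine ⟨p, hp, ?_⟩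
      rw [swap_val p hp]
      split_ifs <;> omega
    by_cases hki' : k = i + 1
    · obtain ⟨p, hp, hpe⟩ := h4 i hi1 (by omega)
      refine ⟨p, hp, ?_⟩
      rw [swap_val p hp]
      split_ifs <;> omega
    · obtain ⟨p, hp, hpe⟩ := h4 k hk1 hk2
      refine ⟨p, hp, ?_⟩
      rw [swap_val p hp]
      split_ifs <;> omega

lemma gammaData_swap (hm : 1 ≤ m) (hi1 : 1 ≤ i) (him : i + 1 ≤ m)
    (hlam : IsPartitionOf n lam) (hT : IsIGLT lam m T)
    (hd : IsDescent lam T i) (hna : ¬ IsAttacking lam T i) :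
    gammaData lam T = gammaData lam (swapTab lam i T) := by
  have hmono := row_mono hT
  have hnn : ¬ ((∃ r c, IsCell lam (r, c) ∧ IsCell lam (r + 1, c) ∧
      T (r, c) = i ∧ T (r + 1, c) = i + 1) ∨
      (∃ p, IsCell lam p ∧ T p = i + 1 ∧ p.1 ≤ rbot lam T i)) :=
    fun h => hna ⟨hd, h⟩
  have HC : ¬ ∃ r c, IsCell lam (r, c) ∧ IsCell lam (r + 1, c) ∧
      T (r, c) = i ∧ T (r + 1, c) = i + 1 := fun h => hnn (Or.inl h)
  have HB : ∀ p : ℕ × ℕ, IsCell lam p → T p = i + 1 → rbot lam T i < p.1 := by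
    intro p hc hpe
    by_contra h
    push_neg at h
    exact hnn (Or.inr ⟨p, hc, hpe, h⟩)
  have hne1 : (rowSet lam T i).Nonempty := by
    obtain ⟨p, hp, hpe⟩ := hT.2.2.2.2 i hi1 (by omega)
    exact ⟨p.1, p.2, hp, hpe⟩
  have hrbot_mem : rbot lam T i ∈ rowSet lam T i :=
    Nat.sSup_mem hne1 (bddAbove_rowSet hlam i)
  have HA : ∀ p : ℕ × ℕ, IsCell lam p → T p = i → p.1 ≤ rbot lam T i := by
    intro p hc hpe
    exact le_csSup (bddAbove_rowSet hlam i) ⟨p.2, hc, hpe⟩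
  have hbmem : cbot lam T i ∈
      {c | IsCell lam (rbot lam T i, c) ∧ T (rbot lam T i, c) = i} :=
    Nat.sInf_mem hrbot_mem
  have hbc : IsCell lam (rbot lam T i, cbot lam T i) := hbmem.1
  have hbe : T (rbot lam T i, cbot lam T i) = i := hbmem.2
  have hne2 : (rowSet lam T (i + 1)).Nonempty := by
    obtain ⟨p, hp, hpe⟩ := hT.2.2.2.2 (i + 1) (by omega) him
    exact ⟨p.1, p.2, hp, hpe⟩
  have hrtop_mem : rtop lam T (i + 1) ∈ rowSet lam T (i + 1) := Nat.sInf_mem hne2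
  have htmem : ctop lam T (i + 1) ∈
      {c | IsCell lam (rtop lam T (i + 1), c) ∧ T (rtop lam T (i + 1), c) = i + 1} :=
    Nat.sInf_mem hrtop_mem
  have htc : IsCell lam (rtop lam T (i + 1), ctop lam T (i + 1)) := htmem.1
  have hte : T (rtop lam T (i + 1), ctop lam T (i + 1)) = i + 1 := htmem.2
  have he : rbot lam T i < rtop lam T (i + 1) := by
    obtain ⟨c, hc, hce⟩ := hrtop_mem
    exact HB (rtop lam T (i + 1), c) hc hce
  ext d
  simp only [gammaData, Set.mem_setOf_eq]
  constructor
  · rintro ⟨j, hj1, hj2, hj3⟩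
    rcases eq_or_ne j i with rfl | hji
    · exact ⟨j + 1, (hasMultiple_congr cellsWith_swap₁).2 hj1,
        (path_iff₁ hi1 HB hbc hbe hmono d.1).1 hj2,
        by rw [hj3, ← cellsWith_swap₁]⟩
    rcases eq_or_ne j (i + 1) with rfl | hji'
    · exact ⟨i, (hasMultiple_congr cellsWith_swap₂).2 hj1,
        (path_iff₂ hi1 HA HC he htc hte hmono d.1).1 hj2,
        by rw [hj3, ← cellsWith_swap₂]⟩
    · exact ⟨j, (hasMultiple_congr (cellsWith_swap₃ hji hji')).2 hj1,
        (path_iff₃ hji hji' d.1).1 hj2,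
        by rw [hj3, ← cellsWith_swap₃ hji hji']⟩
  · rintro ⟨j, hj1, hj2, hj3⟩
    rcases eq_or_ne j i with rfl | hji
    · exact ⟨j + 1, (hasMultiple_congr cellsWith_swap₂).1 hj1,
        (path_iff₂ hi1 HA HC he htc hte hmono d.1).2 hj2,
        by rw [hj3, cellsWith_swap₂]⟩
    rcases eq_or_ne j (i + 1) with rfl | hji'
    · exact ⟨i, (hasMultiple_congr cellsWith_swap₁).1 hj1,
        (path_iff₁ hi1 HB hbc hbe hmono d.1).2 hj2,
        by rw [hj3, cellsWith_swap₁]⟩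
    · exact ⟨j, (hasMultiple_congr (cellsWith_swap₃ hji hji')).1 hj1,
        (path_iff₃ hji hji' d.1).2 hj2,
        by rw [hj3, cellsWith_swap₃ hji hji']⟩

lemma piOp_single (lam : ℕ → ℕ) (i : ℕ) (T : ℕ × ℕ → ℕ) :
    piOp lam i (Finsupp.single T (1 : ℂ)) =
      if ¬ IsDescent lam T i then Finsupp.single T (1 : ℂ)
      else if IsAttacking lam T i then 0
      else Finsupp.single (swapTab lam i T) (1 : ℂ) := by
  unfold piOp
  rw [Finsupp.lsum_single, LinearMap.toSpanSingleton_apply, one_smul]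

end Aux4e
section Aux4f

variable {lam : ℕ → ℕ} {m n i : ℕ} {T : ℕ × ℕ → ℕ}

lemma isIGLT_swap' (hm : 1 ≤ m) (hi1 : 1 ≤ i) (him : i + 1 ≤ m)
    (hlam : IsPartitionOf n lam) (hT : IsIGLT lam m T)
    (hd : IsDescent lam T i) (hna : ¬ IsAttacking lam T i) :
    IsIGLT lam m (swapTab lam i T) := by
  have hnn : ¬ ((∃ r c, IsCell lam (r, c) ∧ IsCell lam (r + 1, c) ∧
      T (r, c) = i ∧ T (r + 1, c) = i + 1) ∨
      (∃ p, IsCell lam p ∧ T p = i + 1 ∧ p.1 ≤ rbot lam T i)) :=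
    fun h => hna ⟨hd, h⟩
  have HC : ¬ ∃ r c, IsCell lam (r, c) ∧ IsCell lam (r + 1, c) ∧
      T (r, c) = i ∧ T (r + 1, c) = i + 1 := fun h => hnn (Or.inl h)
  have HB : ∀ p : ℕ × ℕ, IsCell lam p → T p = i + 1 → rbot lam T i < p.1 := by
    intro p hc hpe
    by_contra h
    push_neg at h
    exact hnn (Or.inr ⟨p, hc, hpe, h⟩)
  have HA : ∀ p : ℕ × ℕ, IsCell lam p → T p = i → p.1 ≤ rbot lam T i := by
    intro p hc hpe
    exact le_csSup (bddAbove_rowSet hlam i) ⟨p.2, hc, hpe⟩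
  exact isIGLT_swap hm hi1 him hT HA HB HC

end Aux4f
/-- For every equivalence class `E` of `∼` and every `1 ≤ i ≤ m-1`, the
span `ℂ·E` is invariant under `π_i`: for every `T ∈ E`, `π_i(T)` is either `0` or an
element of `E`.  In particular, if `i` is a non-attacking descent of `T ∈ E`, then
`s_i · T ∼ T`. -/
theorem piOp_preserves_class (n m : ℕ) (hn : 0 < n) (hm : 0 < m) (hmn : m ≤ n)
    (lam : ℕ → ℕ) (hlam : IsPartitionOf n lam)
    (i : ℕ) (hi1 : 1 ≤ i) (hi2 : i ≤ m - 1)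
    (T : ℕ × ℕ → ℕ) (hT : IsIGLT lam m T) :
    (piOp lam i (Finsupp.single T (1 : ℂ)) = 0 ∨
      ∃ T', IsIGLT lam m T' ∧ TabEquiv lam T T' ∧
        piOp lam i (Finsupp.single T (1 : ℂ)) = Finsupp.single T' (1 : ℂ)) ∧
    (IsDescent lam T i → ¬ IsAttacking lam T i →
      IsIGLT lam m (swapTab lam i T) ∧ TabEquiv lam (swapTab lam i T) T) := by
  have him : i + 1 ≤ m := by omega
  have hm1 : 1 ≤ m := hm
  constructor
  · by_cases hdes : IsDescent lam T i
    · by_cases hatt : IsAttacking lam T i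
      · left
        rw [piOp_single, if_neg (not_not_intro hdes), if_pos hatt]
      · right
        exact ⟨swapTab lam i T, isIGLT_swap' hm1 hi1 him hlam hT hdes hatt,
          gammaData_swap hm1 hi1 him hlam hT hdes hatt,
          by rw [piOp_single, if_neg (not_not_intro hdes), if_neg hatt]⟩
    · right
      exact ⟨T, hT, rfl, by rw [piOp_single, if_pos hdes]⟩
  · intro hdes hatt
    exact ⟨isIGLT_swap' hm1 hi1 him hlam hT hdes hatt,
      (gammaData_swap hm1 hi1 him hlam hT hdes hatt).symm⟩

end Genomic
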